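/- For 0 < p < 1/2 and e > 4p(1-p), the BEC(e) receiver is not less noisy than the BSC(p) receiver: there exists a binary U and a Markov chain U → X → (Y₁,Y₂) with I(U;Y₁) > I(U;Y₂), where Y₁ = BSC(p)(X) and Y₂ = BEC(e)(X). -/
import Mathlib


open Real

/-- Mutual information (in bits) of a joint pmf `q` on a product of finite alphabets,
with the conventions `log 0 = 0`, `x / 0 = 0`. -/
noncomputable def mutualInfo {A B : Type*} [Fintype A] [Fintype B] (q : A → B → ℝ) : ℝ :=
  ∑ a, ∑ b, q a b * Real.logb 2 (q a b / ((∑ b', q a b') * (∑ a', q a' b)))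

/-- Conditional mutual information `I(A;B|U)` (in bits) of a joint pmf `r` on `U × A × B`. -/
noncomputable def condMutualInfo {U A B : Type*} [Fintype U] [Fintype A] [Fintype B]
    (r : U → A → B → ℝ) : ℝ :=
  ∑ u, ∑ a, ∑ b, r u a b *
    Real.logb 2 ((r u a b * (∑ a', ∑ b', r u a' b')) / ((∑ b', r u a b') * (∑ a', r u a' b)))

/-- BSC(p) transition matrix. -/
noncomputable def bscCh (p : ℝ) : Fin 2 → Fin 2 → ℝ := fun x y => if x = y then 1 - p else p

/-- BEC(e) transition matrix; output `2` is the erasure symbol. -/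
noncomputable def becCh (e : ℝ) : Fin 2 → Fin 3 → ℝ := fun x y =>
  if (y : ℕ) = 2 then e else if (y : ℕ) = (x : ℕ) then 1 - e else 0


lemma psi_bounds (u : ℝ) (h0 : 0 ≤ u) (h1 : u ≤ 1/2) :
    u^2/2 - 5/3*u^4 ≤ (1+u)/2 * Real.log (1+u) + (1-u)/2 * Real.log (1-u) ∧
    (1+u)/2 * Real.log (1+u) + (1-u)/2 * Real.log (1-u) ≤ u^2/2 + 7/3*u^4 := by
  have hu1 : |u| < 1 := by rw [abs_of_nonneg h0]; linarith
  have hu1' : |(-u)| < 1 := by rw [abs_neg]; exact hu1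
  have A := Real.abs_log_sub_add_sum_range_le hu1 3
  have B := Real.abs_log_sub_add_sum_range_le hu1' 3
  rw [abs_of_nonneg h0] at A
  rw [abs_neg, abs_of_nonneg h0] at B
  simp only [Finset.sum_range_succ, Finset.sum_range_zero] at A B
  rw [show (1 : ℝ) - -u = 1 + u by ring] at B
  have hden : u^4 / (1 - u) ≤ 2 * u^4 := by
    rw [div_le_iff₀ (by linarith)]
    nlinarith [pow_nonneg h0 4]
  rw [abs_le] at A B
  push_cast at A B
  obtain ⟨A1, A2⟩ := A
  obtain ⟨B1, B2⟩ := B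
  have hA1 : -(2*u^4) - (u ^ 1 / 1 + u ^ 2 / 2 + u ^ 3 / 3) ≤ Real.log (1 - u) := by linarith
  have hA2 : Real.log (1 - u) ≤ 2*u^4 - (u ^ 1 / 1 + u ^ 2 / 2 + u ^ 3 / 3) := by linarith
  have hB1 : -(2*u^4) - ((-u) ^ 1 / 1 + (-u) ^ 2 / 2 + (-u) ^ 3 / 3) ≤ Real.log (1 + u) := by
    linarith
  have hB2 : Real.log (1 + u) ≤ 2*u^4 - ((-u) ^ 1 / 1 + (-u) ^ 2 / 2 + (-u) ^ 3 / 3) := by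
    linarith
  have c1 : (0:ℝ) ≤ (1+u)/2 := by linarith
  have c2 : (0:ℝ) ≤ (1-u)/2 := by linarith
  constructor
  · nlinarith [mul_le_mul_of_nonneg_left hB1 c1, mul_le_mul_of_nonneg_left hA1 c2,
      pow_nonneg h0 4, pow_nonneg h0 5]
  · nlinarith [mul_le_mul_of_nonneg_left hB2 c1, mul_le_mul_of_nonneg_left hA2 c2,
      pow_nonneg h0 4, pow_nonneg h0 5]

lemma mi_bsc (w : ℝ) :
    mutualInfo (fun a b : Fin 2 => if a = b then (1+w)/4 else (1-w)/4)
      = ((1+w)/2 * Real.log (1+w) + (1-w)/2 * Real.log (1-w)) / Real.log 2 := by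
  simp only [mutualInfo, Fin.sum_univ_two]
  norm_num
  rw [show (1 + w) / 4 / (((1 + w) / 4 + (1 - w) / 4) * ((1 + w) / 4 + (1 - w) / 4)) = 1 + w by ring,
    show (1 - w) / 4 / (((1 + w) / 4 + (1 - w) / 4) * ((1 - w) / 4 + (1 + w) / 4)) = 1 - w by ring,
    show (1 - w) / 4 / (((1 - w) / 4 + (1 + w) / 4) * ((1 + w) / 4 + (1 - w) / 4)) = 1 - w by ring,
    show (1 + w) / 4 / (((1 - w) / 4 + (1 + w) / 4) * ((1 - w) / 4 + (1 + w) / 4)) = 1 + w by ring]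
  simp only [Real.logb]
  ring

set_option maxHeartbeats 1000000 in
lemma mi_bec (v e : ℝ) (he0 : 0 < e) (he1 : e < 1) :
    mutualInfo (fun (a : Fin 2) (b : Fin 3) => if (b:ℕ) = 2 then e/2
        else if (b:ℕ) = (a:ℕ) then (1-e)*(1+v)/4 else (1-e)*(1-v)/4)
      = (1-e) * (((1+v)/2 * Real.log (1+v) + (1-v)/2 * Real.log (1-v)) / Real.log 2) := by
  have h1 : (1:ℝ) - e ≠ 0 := by linarith
  have h2 : e ≠ 0 := ne_of_gt he0
  have hd1 : ((1:ℝ)-e)/4 ≠ 0 := div_ne_zero h1 (by norm_num)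
  have hd2 : e/2 ≠ 0 := div_ne_zero h2 (by norm_num)
  simp only [mutualInfo, Fin.sum_univ_two, Fin.sum_univ_three]
  norm_num
  rw [show ((1 - e) * (1 + v) / 4 + (1 - e) * (1 - v) / 4 + e / 2) *
          ((1 - e) * (1 + v) / 4 + (1 - e) * (1 - v) / 4) = (1-e)/4 by ring,
    show ((1 - e) * (1 + v) / 4 + (1 - e) * (1 - v) / 4 + e / 2) *
          ((1 - e) * (1 - v) / 4 + (1 - e) * (1 + v) / 4) = (1-e)/4 by ring,
    show ((1 - e) * (1 + v) / 4 + (1 - e) * (1 - v) / 4 + e / 2) * e = e/2 by ring,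
    show ((1 - e) * (1 - v) / 4 + (1 - e) * (1 + v) / 4 + e / 2) *
          ((1 - e) * (1 + v) / 4 + (1 - e) * (1 - v) / 4) = (1-e)/4 by ring,
    show ((1 - e) * (1 - v) / 4 + (1 - e) * (1 + v) / 4 + e / 2) *
          ((1 - e) * (1 - v) / 4 + (1 - e) * (1 + v) / 4) = (1-e)/4 by ring,
    show ((1 - e) * (1 - v) / 4 + (1 - e) * (1 + v) / 4 + e / 2) * e = e/2 by ring]
  rw [show (1 - e) * (1 + v) / 4 / ((1-e)/4) = (1+v) by
        rw [div_eq_iff hd1]; ring,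
    show (1 - e) * (1 - v) / 4 / ((1-e)/4) = (1-v) by
        rw [div_eq_iff hd1]; ring,
    div_self hd2]
  simp only [Real.logb, Real.log_one, zero_div, mul_zero, add_zero]
  ring

lemma mi_bec_one (v : ℝ) :
    mutualInfo (fun (a : Fin 2) (b : Fin 3) => if (b:ℕ) = 2 then (1:ℝ)/2
        else if (b:ℕ) = (a:ℕ) then (1-1)*(1+v)/4 else (1-1)*(1-v)/4) = 0 := by
  simp only [mutualInfo, Fin.sum_univ_two, Fin.sum_univ_three]
  norm_num


lemma psi_pos (w : ℝ) (hw0 : 0 < w) (hwh : w ≤ 1/2) :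
    0 < (1+w)/2 * Real.log (1+w) + (1-w)/2 * Real.log (1-w) := by
  obtain ⟨Lw, _⟩ := psi_bounds w hw0.le hwh
  have hsq : w * w ≤ 1/4 := by nlinarith
  have hw4 : w^4 ≤ w^2/4 := by nlinarith [sq_nonneg w]
  nlinarith [mul_pos hw0 hw0]

lemma key_ineq (e d c v : ℝ) (hd : 0 < d) (hc0 : 0 < c) (hc1 : c ≤ 1)
    (hv0 : 0 < v) (hvh : v ≤ 1/2) (hv2 : v^2 ≤ d/9)
    (h0e : 0 ≤ 1 - e) (h1e : 1 - e ≤ 1) (hdc : c^2 = d + (1-e)) :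
    (1 - e) * ((1+v)/2 * Real.log (1+v) + (1-v)/2 * Real.log (1-v))
      < (1+v*c)/2 * Real.log (1+v*c) + (1-v*c)/2 * Real.log (1-v*c) := by
  have hw0 : 0 < v * c := mul_pos hv0 hc0
  have hwv : v * c ≤ v := by nlinarith
  have hwh : v * c ≤ 1/2 := le_trans hwv hvh
  obtain ⟨Lw, _⟩ := psi_bounds (v*c) hw0.le hwh
  obtain ⟨_, Uv⟩ := psi_bounds v hv0.le hvh
  have step1 : (1 - e) * ((1+v)/2 * Real.log (1+v) + (1-v)/2 * Real.log (1-v))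
      ≤ (1 - e) * (v^2/2 + 7/3*v^4) := mul_le_mul_of_nonneg_left Uv h0e
  have step2 : (1 - e) * (v^2/2 + 7/3*v^4) ≤ (1-e) * v^2/2 + 7/3*v^4 := by
    nlinarith [pow_nonneg hv0.le 4]
  have hw4 : (v*c)^4 ≤ v^4 := pow_le_pow_left₀ hw0.le hwv 4
  have hw2 : (v*c)^2 = (d + (1-e)) * v^2 := by rw [← hdc]; ring
  have step3 : (1-e) * v^2/2 + 7/3*v^4 < (v*c)^2/2 - 5/3*(v*c)^4 := by
    rw [hw2]
    nlinarith [mul_le_mul_of_nonneg_right hv2 (sq_nonneg v), hw4,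
      mul_pos hd (mul_pos hv0 hv0), sq_nonneg v]
  linarith

/-- If e > 4p(1-p), the BEC(e) receiver is not less noisy than the BSC(p) receiver:
some binary U with U → X → (Y₁,Y₂) Markov has I(U;Y₁) > I(U;Y₂). -/
theorem stmt16 (p e : ℝ) (hp0 : 0 < p) (hp1 : p < 1 / 2)
    (he0 : 4 * p * (1 - p) < e) (he1 : e ≤ 1) :
    ∃ q : Fin 2 → Fin 2 → ℝ, (∀ u x, 0 ≤ q u x) ∧ (∑ u, ∑ x, q u x) = 1 ∧
      mutualInfo (fun u y₂ => ∑ x, q u x * becCh e x y₂)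
        < mutualInfo (fun u y₁ => ∑ x, q u x * bscCh p x y₁) := by
  have hep : 0 < e := lt_of_le_of_lt (by nlinarith) he0
  have hd : (0:ℝ) < e - 4*p*(1-p) := by linarith
  have hc0 : (0:ℝ) < 1 - 2*p := by linarith
  have hc1 : (1:ℝ) - 2*p ≤ 1 := by linarith
  have hlog2 : 0 < Real.log 2 := Real.log_pos (by norm_num)
  obtain ⟨v, hv0, hvh, hv2⟩ : ∃ v : ℝ, 0 < v ∧ v ≤ 1/2 ∧ v^2 ≤ (e - 4*p*(1-p))/9 := by
    refine ⟨min (1/2) (Real.sqrt (e - 4*p*(1-p)) / 3), lt_min (by norm_num) (by positivity),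
      min_le_left _ _, ?_⟩
    have h1 : min (1/2) (Real.sqrt (e - 4*p*(1-p)) / 3) ≤ Real.sqrt (e - 4*p*(1-p)) / 3 :=
      min_le_right _ _
    have h0 : (0:ℝ) ≤ min (1/2) (Real.sqrt (e - 4*p*(1-p)) / 3) :=
      le_min (by norm_num) (by positivity)
    have h2 := pow_le_pow_left₀ h0 h1 2
    rwa [div_pow, Real.sq_sqrt hd.le, show ((3:ℝ))^2 = 9 by norm_num] at h2
  have hw0 : 0 < v * (1 - 2*p) := mul_pos hv0 hc0
  have hwh : v * (1 - 2*p) ≤ 1/2 := by nlinarith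
  refine ⟨fun a b => if a = b then (1+v)/4 else (1-v)/4, ?_, ?_, ?_⟩
  · intro u x
    dsimp only
    split <;> linarith
  · simp [Fin.sum_univ_two]
    ring
  · have hq1 : (fun (u : Fin 2) (y₁ : Fin 2) =>
          ∑ x, (if u = x then (1+v)/4 else (1-v)/4) * bscCh p x y₁)
        = (fun a b : Fin 2 => if a = b then (1+v*(1-2*p))/4 else (1-v*(1-2*p))/4) := by
      funext a b
      fin_cases a <;> fin_cases b <;> simp [bscCh, Fin.sum_univ_two] <;> ring
    have hq2 : (fun (u : Fin 2) (y₂ : Fin 3) =>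
          ∑ x, (if u = x then (1+v)/4 else (1-v)/4) * becCh e x y₂)
        = (fun (a : Fin 2) (b : Fin 3) => if (b:ℕ) = 2 then e/2
          else if (b:ℕ) = (a:ℕ) then (1-e)*(1+v)/4 else (1-e)*(1-v)/4) := by
      funext a b
      fin_cases a <;> fin_cases b <;> simp [becCh, Fin.sum_univ_two] <;> ring
    rw [hq1, hq2, mi_bsc]
    rcases lt_or_eq_of_le he1 with he1' | he1'
    · rw [mi_bec v e hep he1']
      have key := key_ineq e (e - 4*p*(1-p)) (1 - 2*p) v hd hc0 hc1 hv0 hvh hv2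
        (by linarith) (by linarith) (by ring)
      calc (1 - e) * (((1+v)/2 * Real.log (1+v) + (1-v)/2 * Real.log (1-v)) / Real.log 2)
          = ((1 - e) * ((1+v)/2 * Real.log (1+v) + (1-v)/2 * Real.log (1-v))) / Real.log 2 := by
            ring
        _ < ((1+v*(1-2*p))/2 * Real.log (1+v*(1-2*p))
              + (1-v*(1-2*p))/2 * Real.log (1-v*(1-2*p))) / Real.log 2 := by
            exact (div_lt_div_iff_of_pos_right hlog2).mpr key
    · subst he1'
      rw [mi_bec_one]
      exact div_pos (psi_pos _ hw0 hwh) hlog2
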